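/- arXiv:1604.00526 — 8 statements merged into one kernel-verified Lean document; each statement's English description precedes it below -/
import Mathlib

section
/- For every k ∈ ℕ, the Lyapunov values satisfy Φ_{k+1} ≤ Φ_k − (1/2)(1/γ_k − L_{j_k}(x^k_{−j_k}) − 2M√(ρ_τ τ))‖x^{k+1}_{j_k} − x^k_{j_k}‖²; in particular, since γ_k ≤ c(L + 2M√(ρ_τ τ))^{−1} with c ∈ (0,1), one has Φ_{k+1} ≤ Φ_k − C‖x^{k+1} − x^k‖² for all k ∈ ℕ, where C := (1/2)(1/c − 1)(L + 2M√(ρ_τ τ)) > 0. -/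
/-!
Write `Δ = x^{k+1}_{j_k} - x^k_{j_k}`. Comparing the prox step with staying put gives
`r_{j_k}(x^{k+1}) + ⟨∇_{j_k} f(x^{k-d_k}), Δ⟩ + ‖Δ‖²/(2γ_k) ≤ r_{j_k}(x^k)`, and the descent lemma
for the `L_{j_k}`-Lipschitz partial gradient gives
`f(x^{k+1}) ≤ f(x^k) + ⟨∇_{j_k} f(x^k), Δ⟩ + L_{j_k}‖Δ‖²/2`. The delay error is at most
`M ‖x^k - x^{k-d_k}‖ ‖Δ‖`; in each block, `x^k - x^{k-d_k}` telescopes over at most `ρ_τ` nonzero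
steps among the last `τ`, so by Cauchy–Schwarz its square is at most `ρ_τ S_k`, where `S_k` is the
sum of the last `τ` squared steps. Young's inequality then bounds the error by
`(M√ρ_τ/(2√τ)) S_k + (M√(ρ_τ τ)/2)‖Δ‖²`, and the weights of `κ` are chosen so that
`κ_{k+1} - κ_k = (M√ρ_τ/(2√τ)) (τ‖Δ‖² - S_k)`, which cancels `S_k`.
-/

open Finset Filter RealInnerProductSpace

/-- squared ℓ²-norm on the product `H = H₁ × ⋯ × H_m`: `‖x‖² = Σ_j ‖x_j‖²`. -/
noncomputable def sqNorm {m : ℕ} {H : Fin m → Type*} [∀ j, NormedAddCommGroup (H j)]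
    (x : ∀ j, H j) : ℝ := ∑ j, ‖x j‖ ^ 2

/-- the partial gradient map: `y ↦ ∇_j f(x_1, …, x_{j-1}, y, x_{j+1}, …, x_m)`. -/
noncomputable def pgrad {m : ℕ} {H : Fin m → Type*} [∀ j, NormedAddCommGroup (H j)]
    [∀ j, InnerProductSpace ℝ (H j)] [∀ j, FiniteDimensional ℝ (H j)]
    (f : (∀ j, H j) → ℝ) (x : ∀ j, H j) (j : Fin m) (y : H j) : H j :=
  gradient (fun z => f (Function.update x j z)) y

theorem le_add_inner_add_sq_of_gradient_lipschitz {E : Type*} [NormedAddCommGroup E]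
    [InnerProductSpace ℝ E] [CompleteSpace E] {φ : E → ℝ} {G : E → E}
    (hG : ∀ y, HasGradientAt φ (G y) y) {K : ℝ} (hK : ∀ y y', ‖G y - G y'‖ ≤ K * ‖y - y'‖)
    (u v : E) : φ v ≤ φ u + ⟪G u, v - u⟫ + K / 2 * ‖v - u‖ ^ 2 := by
  set Δ := v - u
  have hψ : ∀ t : ℝ, HasDerivAt (fun t : ℝ => φ (u + t • Δ)) ⟪G (u + t • Δ), Δ⟫ t := by
    intro t
    have hline : HasDerivAt (fun t : ℝ => u + t • Δ) Δ t := by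
      simpa using ((hasDerivAt_id t).smul_const Δ).const_add u
    have h := (hG (u + t • Δ)).hasFDerivAt.comp_hasDerivAt t hline
    rwa [InnerProductSpace.toDual_apply_apply] at h
  have hB : ∀ t : ℝ, HasDerivAt (fun t : ℝ => φ u + t * ⟪G u, Δ⟫ + K / 2 * ‖Δ‖ ^ 2 * t ^ 2)
      (⟪G u, Δ⟫ + K * ‖Δ‖ ^ 2 * t) t := by
    intro t
    refine ((((hasDerivAt_id' t).mul_const ⟪G u, Δ⟫).const_add (φ u)).add
      ((hasDerivAt_pow 2 t).const_mul (K / 2 * ‖Δ‖ ^ 2))).congr_deriv ?_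
    norm_num
    ring
  have hslope : ∀ t ∈ Set.Ico (0 : ℝ) 1,
      ⟪G (u + t • Δ), Δ⟫ ≤ ⟪G u, Δ⟫ + K * ‖Δ‖ ^ 2 * t := by
    rintro t ⟨ht, -⟩
    have hlip : ‖G (u + t • Δ) - G u‖ ≤ K * (t * ‖Δ‖) := by
      simpa [norm_smul, abs_of_nonneg ht] using hK (u + t • Δ) u
    calc ⟪G (u + t • Δ), Δ⟫ = ⟪G u, Δ⟫ + ⟪G (u + t • Δ) - G u, Δ⟫ := by
          rw [inner_sub_left]; ring
      _ ≤ ⟪G u, Δ⟫ + ‖G (u + t • Δ) - G u‖ * ‖Δ‖ := by gcongr; exact real_inner_le_norm _ _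
      _ ≤ ⟪G u, Δ⟫ + K * (t * ‖Δ‖) * ‖Δ‖ := by gcongr
      _ = ⟪G u, Δ⟫ + K * ‖Δ‖ ^ 2 * t := by ring
  have h := image_le_of_deriv_right_le_deriv_boundary
    (fun t _ => (hψ t).continuousAt.continuousWithinAt) (fun t _ => (hψ t).hasDerivWithinAt)
    (by simp) (fun t _ => (hB t).continuousAt.continuousWithinAt)
    (fun t _ => (hB t).hasDerivWithinAt) hslope (Set.right_mem_Icc.2 zero_le_one)
  simpa only [one_smul, one_mul, one_pow, mul_one, Δ, add_sub_cancel] using h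

theorem sq_norm_sum_le_card_mul_sum_sq_of_eq_zero {ι E : Type*} [SeminormedAddCommGroup E]
    {s t : Finset ι} {v : ι → E} (hv : ∀ i ∈ s, i ∉ t → v i = 0) :
    ‖∑ i ∈ s, v i‖ ^ 2 ≤ #t * ∑ i ∈ s, ‖v i‖ ^ 2 := by
  classical
  have hsum : ∑ i ∈ s ∩ t, v i = ∑ i ∈ s, v i :=
    sum_subset inter_subset_left fun i hs hst => hv i hs fun ht => hst (mem_inter.2 ⟨hs, ht⟩)
  calc ‖∑ i ∈ s, v i‖ ^ 2 = ‖∑ i ∈ s ∩ t, v i‖ ^ 2 := by rw [hsum]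
    _ ≤ (∑ i ∈ s ∩ t, ‖v i‖) ^ 2 := by gcongr; exact norm_sum_le _ _
    _ ≤ #(s ∩ t) * ∑ i ∈ s ∩ t, ‖v i‖ ^ 2 := sq_sum_le_card_mul_sum_sq
    _ ≤ #t * ∑ i ∈ s, ‖v i‖ ^ 2 := by
      gcongr
      · exact inter_subset_right
      · exact inter_subset_left

theorem sum_range_succ_mul_shift (τ : ℕ) (s : ℤ → ℝ) (k : ℤ) :
    ∑ i ∈ range τ, ((i : ℝ) + 1) * s (k + 1 - τ + i) =
      ∑ i ∈ range τ, ((i : ℝ) + 1) * s (k - τ + i) - ∑ i ∈ range τ, s (k - τ + i) + τ * s k := by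
  set g : ℕ → ℝ := fun i => s (k - τ + i)
  have hshift : ∀ i : ℕ, s (k + 1 - τ + i) = g (i + 1) := fun i => by
    simp only [g]; congr 1; push_cast; ring
  have hτ : s k = g τ := by simp only [g]; congr 1; ring
  have h1 := sum_range_succ' (fun i => (i : ℝ) * g i) τ
  have h2 := sum_range_succ (fun i => (i : ℝ) * g i) τ
  have h3 : ∑ i ∈ range τ, ((i : ℝ) + 1) * g i = ∑ i ∈ range τ, (i : ℝ) * g i + ∑ i ∈ range τ, g i := by
    rw [← sum_add_distrib]; exact sum_congr rfl fun i _ => by ring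
  simp only [hshift, hτ]
  push_cast at h1
  linarith

theorem mul_le_add_of_sq_le_sq_mul {M α β w n S : ℝ} (hM : 0 ≤ M) (hα : 0 < α) (hβ : 0 < β)
    (hw : w ^ 2 ≤ α ^ 2 * S) :
    M * w * n ≤ M * α / (2 * β) * S + M * α / (2 * β) * β ^ 2 * n ^ 2 := by
  have hyoung : 2 * β * w * n ≤ α * S + α * β ^ 2 * n ^ 2 := by
    nlinarith [sq_nonneg (w - α * β * n)]
  have hfactor : M * α / (2 * β) * S + M * α / (2 * β) * β ^ 2 * n ^ 2 - M * w * n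
      = M / (2 * β) * (α * S + α * β ^ 2 * n ^ 2 - 2 * β * w * n) := by
    field_simp
  linarith [mul_nonneg (div_nonneg hM (by positivity : (0 : ℝ) ≤ 2 * β)) (sub_nonneg.2 hyoung)]

theorem inner_le_of_norm_le_mul_sqrt {E : Type*} [NormedAddCommGroup E] [InnerProductSpace ℝ E]
    {u v : E} {M α β q S : ℝ} (hM : 0 ≤ M) (hα : 0 < α) (hβ : 0 < β) (hu : ‖u‖ ≤ M * Real.sqrt q)
    (hq0 : 0 ≤ q) (hq : q ≤ α ^ 2 * S) :
    ⟪u, v⟫ ≤ M * α / (2 * β) * S + M * α / (2 * β) * β ^ 2 * ‖v‖ ^ 2 :=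
  calc ⟪u, v⟫ ≤ ‖u‖ * ‖v‖ := real_inner_le_norm u v
    _ ≤ M * Real.sqrt q * ‖v‖ := by gcongr
    _ ≤ _ := mul_le_add_of_sq_le_sq_mul hM hα hβ ((Real.sq_sqrt hq0).trans_le hq)

theorem half_mul_one_div_sub_one_le {c γ K L A : ℝ} (hc : 0 < c) (hγ : 0 < γ) (hLA : 0 < L + A)
    (hγle : γ ≤ c / (L + A)) (hK : K ≤ L) :
    1 / 2 * (1 / c - 1) * (L + A) ≤ 1 / 2 * (1 / γ - K - A) := by
  have hinv : (L + A) / c ≤ 1 / γ := by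
    rw [div_le_div_iff₀ hc hγ]
    linarith [(le_div_iff₀ hLA).1 hγle]
  have hsplit : 1 / 2 * (1 / c - 1) * (L + A) = 1 / 2 * ((L + A) / c - (L + A)) := by ring
  rw [hsplit]
  linarith

theorem EReal.add_add_le_sub_of_le {u u' w w' p D : ℝ} {a b R : EReal}
    (hreal : u' + w' + D ≤ u + w + p) (hab : b + p ≤ a) :
    (u' + (b + R)) + w' ≤ (u + (a + R)) + w - D := by
  rw [EReal.le_sub_iff_add_le (Or.inl (EReal.coe_ne_bot _)) (Or.inl (EReal.coe_ne_top _))]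
  calc (u' : EReal) + (b + R) + w' + D = ((u' + w' + D : ℝ) : EReal) + b + R := by
        push_cast; ac_rfl
    _ ≤ ((u + w + p : ℝ) : EReal) + b + R := by gcongr
    _ = ((u + w : ℝ) : EReal) + (b + p) + R := by push_cast; ac_rfl
    _ ≤ ((u + w : ℝ) : EReal) + a + R := by gcongr
    _ = u + (a + R) + w := by push_cast; ac_rfl

theorem sqNorm_nonneg {m : ℕ} {H : Fin m → Type*} [∀ j, NormedAddCommGroup (H j)]
    (x : ∀ j, H j) : 0 ≤ sqNorm x :=
  sum_nonneg fun _ _ => sq_nonneg _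

section Iteration

variable {m : ℕ} {H : Fin m → Type*} {x : ℤ → ∀ j, H j} {jj : ℕ → Fin m}

theorem succ_apply_eq_of_inactive (hx0 : ∀ h : ℤ, h ≤ 0 → x h = x 0)
    (hoff : ∀ (k : ℕ) (j : Fin m), j ≠ jj k → x ((k : ℤ) + 1) j = x k j) {h : ℤ} {j : Fin m}
    (hj : ∀ n : ℕ, (n : ℤ) = h → jj n ≠ j) : x (h + 1) j = x h j := by
  rcases lt_or_ge h 0 with hneg | hnonneg
  · rw [hx0 (h + 1) (by omega), hx0 h hneg.le]
  · obtain ⟨n, rfl⟩ := Int.eq_ofNat_of_zero_le hnonneg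
    exact hoff n j (hj n rfl).symm

theorem update_eq_succ (hoff : ∀ (k : ℕ) (j : Fin m), j ≠ jj k → x ((k : ℤ) + 1) j = x k j)
    (k : ℕ) : Function.update (x k) (jj k) (x ((k : ℤ) + 1) (jj k)) = x ((k : ℤ) + 1) :=
  Function.update_eq_iff.2 ⟨rfl, fun j hj => (hoff k j hj).symm⟩

theorem sum_apply_succ {β : Type*} [AddCommMonoid β]
    (hoff : ∀ (k : ℕ) (j : Fin m), j ≠ jj k → x ((k : ℤ) + 1) j = x k j) (k : ℕ)
    (g : ∀ j, H j → β) :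
    ∑ j, g j (x ((k : ℤ) + 1) j) =
      g (jj k) (x ((k : ℤ) + 1) (jj k)) + ∑ j ∈ univ.erase (jj k), g j (x k j) := by
  rw [← add_sum_erase _ _ (mem_univ (jj k))]
  exact congrArg _ (sum_congr rfl fun j hj => by rw [hoff k j (ne_of_mem_erase hj)])

variable [∀ j, NormedAddCommGroup (H j)]

theorem sqNorm_succ_sub (hoff : ∀ (k : ℕ) (j : Fin m), j ≠ jj k → x ((k : ℤ) + 1) j = x k j)
    (k : ℕ) : sqNorm (x ((k : ℤ) + 1) - x k) = ‖x ((k : ℤ) + 1) (jj k) - x k (jj k)‖ ^ 2 :=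
  sum_eq_single (jj k) (fun j _ hj => by simp [hoff k j hj]) (by simp)

theorem sq_norm_sub_delayed_le (hx0 : ∀ h : ℤ, h ≤ 0 → x h = x 0)
    (hoff : ∀ (k : ℕ) (j : Fin m), j ≠ jj k → x ((k : ℤ) + 1) j = x k j) {τ ρτ k : ℕ}
    {j : Fin m} (hcount : Set.ncard {h : ℕ | k - τ ≤ h ∧ h ≤ k ∧ jj h = j} ≤ ρτ)
    {δ : ℕ} (hδ : δ ≤ τ) :
    ‖x k j - x ((k : ℤ) - δ) j‖ ^ 2 ≤
      ρτ * ∑ i ∈ range τ, ‖x ((k : ℤ) - τ + 1 + i) j - x ((k : ℤ) - τ + i) j‖ ^ 2 := by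
  set t := (range τ).filter fun i => τ ≤ k + i ∧ jj (k + i - τ) = j
  have htel : x k j - x ((k : ℤ) - δ) j =
      ∑ i ∈ Ico (τ - δ) τ, (x ((k : ℤ) - τ + 1 + i) j - x ((k : ℤ) - τ + i) j) := by
    have h := sum_Ico_sub (fun i : ℕ => x ((k : ℤ) - τ + i) j) (Nat.sub_le τ δ)
    simp only [Nat.cast_add, Nat.cast_one, Nat.cast_sub hδ] at h
    convert h.symm using 3 <;> ring_nf
  have hcard : #t ≤ ρτ := by
    refine le_trans ?_ hcount
    rw [← Set.ncard_coe_finset]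
    refine Set.ncard_le_ncard_of_injOn (fun i => k + i - τ) (fun i hi => ?_) (fun i hi i' hi' he => ?_)
      ((Set.finite_Iic k).subset fun h hh => hh.2.1)
    · simp only [t, coe_filter, mem_range, Set.mem_ofPred_eq] at hi ⊢
      omega
    · simp only [t, coe_filter, mem_range, Set.mem_ofPred_eq] at hi hi' he
      omega
  have hinactive : ∀ i ∈ Ico (τ - δ) τ, i ∉ t →
      x ((k : ℤ) - τ + 1 + i) j - x ((k : ℤ) - τ + i) j = 0 := by
    intro i hi hit
    rw [sub_eq_zero, add_right_comm]
    refine succ_apply_eq_of_inactive hx0 hoff fun n hn hjn => hit ?_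
    simp only [t, mem_filter, mem_range, mem_Ico] at hi ⊢
    refine ⟨hi.2, by omega, ?_⟩
    rwa [show k + i - τ = n by omega]
  calc ‖x k j - x ((k : ℤ) - δ) j‖ ^ 2 = ‖∑ i ∈ Ico (τ - δ) τ,
        (x ((k : ℤ) - τ + 1 + i) j - x ((k : ℤ) - τ + i) j)‖ ^ 2 := by rw [htel]
    _ ≤ #t * ∑ i ∈ Ico (τ - δ) τ, ‖x ((k : ℤ) - τ + 1 + i) j - x ((k : ℤ) - τ + i) j‖ ^ 2 :=
      sq_norm_sum_le_card_mul_sum_sq_of_eq_zero hinactive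
    _ ≤ ρτ * ∑ i ∈ range τ, ‖x ((k : ℤ) - τ + 1 + i) j - x ((k : ℤ) - τ + i) j‖ ^ 2 := by
      gcongr
      exact fun i hi => mem_range.2 (mem_Ico.1 hi).2

theorem sqNorm_sub_delayed_le (hx0 : ∀ h : ℤ, h ≤ 0 → x h = x 0)
    (hoff : ∀ (k : ℕ) (j : Fin m), j ≠ jj k → x ((k : ℤ) + 1) j = x k j) {τ ρτ k : ℕ}
    (hcount : ∀ j : Fin m, Set.ncard {h : ℕ | k - τ ≤ h ∧ h ≤ k ∧ jj h = j} ≤ ρτ)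
    {d : Fin m → ℕ} (hd : ∀ j, d j ≤ τ) {xd : ∀ j, H j} (hxd : ∀ j, xd j = x ((k : ℤ) - d j) j) :
    sqNorm (x k - xd) ≤
      ρτ * ∑ i ∈ range τ, sqNorm (x ((k : ℤ) - τ + 1 + i) - x ((k : ℤ) - τ + i)) := by
  simp only [sqNorm, Pi.sub_apply, hxd]
  rw [sum_comm, mul_sum]
  exact sum_le_sum fun j _ => sq_norm_sub_delayed_le hx0 hoff (hcount j) (hd j)

theorem weighted_window_succ
    (hoff : ∀ (k : ℕ) (j : Fin m), j ≠ jj k → x ((k : ℤ) + 1) j = x k j) {τ : ℕ} {a : ℝ}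
    {κ : ℕ → ℝ} (hκ : ∀ k : ℕ, κ k = a * ∑ i ∈ range τ,
      ((i : ℝ) + 1) * sqNorm (x ((k : ℤ) - τ + 1 + i) - x ((k : ℤ) - τ + i))) (k : ℕ) :
    κ (k + 1) = κ k - a * ∑ i ∈ range τ, sqNorm (x ((k : ℤ) - τ + 1 + i) - x ((k : ℤ) - τ + i)) +
      a * τ * ‖x ((k : ℤ) + 1) (jj k) - x k (jj k)‖ ^ 2 := by
  set s : ℤ → ℝ := fun h => sqNorm (x (h + 1) - x h)
  have hs : ∀ (k : ℤ) (i : ℕ), sqNorm (x (k - τ + 1 + i) - x (k - τ + i)) = s (k - τ + i) :=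
    fun k i => by simp only [s, add_right_comm]
  simp only [hκ, hs, Nat.cast_succ, sum_range_succ_mul_shift]
  rw [← sqNorm_succ_sub hoff k]
  ring

variable [∀ j, InnerProductSpace ℝ (H j)] [∀ j, FiniteDimensional ℝ (H j)]

theorem apply_succ_le_of_pgrad_lipschitz {f : (∀ j, H j) → ℝ}
    (hf : Differentiable ℝ f)
    (hoff : ∀ (k : ℕ) (j : Fin m), j ≠ jj k → x ((k : ℤ) + 1) j = x k j) (k : ℕ) {K : ℝ}
    (hK : ∀ y y', ‖pgrad f (x k) (jj k) y - pgrad f (x k) (jj k) y'‖ ≤ K * ‖y - y'‖) :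
    f (x ((k : ℤ) + 1)) ≤ f (x k) + ⟪pgrad f (x k) (jj k) (x k (jj k)),
      x ((k : ℤ) + 1) (jj k) - x k (jj k)⟫ + K / 2 * ‖x ((k : ℤ) + 1) (jj k) - x k (jj k)‖ ^ 2 := by
  have hφ : Differentiable ℝ fun z => f (Function.update (x k) (jj k) z) :=
    hf.comp ((contDiff_update 1 (x k) (jj k)).differentiable one_ne_zero)
  have h := le_add_inner_add_sq_of_gradient_lipschitz (fun y => (hφ y).hasGradientAt) hK
    (x k (jj k)) (x ((k : ℤ) + 1) (jj k))
  rwa [update_eq_succ hoff, Function.update_eq_self] at h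

theorem lyapunov_step {f : (∀ j, H j) → ℝ} (hf : Differentiable ℝ f) {r : ∀ j, H j → EReal}
    {Ψ : (∀ j, H j) → EReal} (hΨ : ∀ y, Ψ y = (f y : EReal) + ∑ j, r j (y j))
    {τ ρτ : ℕ} (hτ : 1 ≤ τ) (hρτ : 1 ≤ ρτ) {M : ℝ} (hM : 0 ≤ M)
    (hx0 : ∀ h : ℤ, h ≤ 0 → x h = x 0)
    (hoff : ∀ (k : ℕ) (j : Fin m), j ≠ jj k → x ((k : ℤ) + 1) j = x k j) {k : ℕ}
    {d : Fin m → ℕ} (hd : ∀ j, d j ≤ τ)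
    (hcount : ∀ j : Fin m, Set.ncard {h : ℕ | k - τ ≤ h ∧ h ≤ k ∧ jj h = j} ≤ ρτ)
    {xd : ∀ j, H j} (hxd : ∀ j, xd j = x ((k : ℤ) - d j) j) {γ K : ℝ}
    (hprox : r (jj k) (x ((k : ℤ) + 1) (jj k)) +
        ((⟪pgrad f xd (jj k) (xd (jj k)), x ((k : ℤ) + 1) (jj k) - x k (jj k)⟫ +
          1 / (2 * γ) * ‖x ((k : ℤ) + 1) (jj k) - x k (jj k)‖ ^ 2 : ℝ) : EReal) ≤
      r (jj k) (x k (jj k)))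
    (hK : ∀ y y', ‖pgrad f (x k) (jj k) y - pgrad f (x k) (jj k) y'‖ ≤ K * ‖y - y'‖)
    (hMd : ‖pgrad f (x k) (jj k) (x k (jj k)) - pgrad f xd (jj k) (xd (jj k))‖ ≤
      M * Real.sqrt (sqNorm (x k - xd)))
    {κ : ℕ → ℝ} (hκ : ∀ k : ℕ, κ k = (M * Real.sqrt ρτ / (2 * Real.sqrt τ)) *
      ∑ i ∈ range τ, ((i : ℝ) + 1) * sqNorm (x ((k : ℤ) - τ + 1 + i) - x ((k : ℤ) - τ + i)))
    {Φ : ℕ → EReal} (hΦ : ∀ k : ℕ, Φ k = Ψ (x k) + (κ k : EReal)) :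
    Φ (k + 1) ≤ Φ k - (((1 / 2) * (1 / γ - K - 2 * M * Real.sqrt ((ρτ : ℝ) * τ)) *
      ‖x ((k : ℤ) + 1) (jj k) - x k (jj k)‖ ^ 2 : ℝ) : EReal) := by
  have hα : 0 < Real.sqrt ρτ := Real.sqrt_pos.2 (by exact_mod_cast hρτ)
  have hβ : 0 < Real.sqrt τ := Real.sqrt_pos.2 (by exact_mod_cast hτ)
  have hβτ : Real.sqrt τ ^ 2 = τ := Real.sq_sqrt (Nat.cast_nonneg _)
  have hdesc := apply_succ_le_of_pgrad_lipschitz hf hoff k hK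
  have hcross := inner_le_of_norm_le_mul_sqrt (v := x ((k : ℤ) + 1) (jj k) - x k (jj k))
    hM hα hβ hMd (sqNorm_nonneg _)
    (by rw [Real.sq_sqrt (Nat.cast_nonneg _)]; exact sqNorm_sub_delayed_le hx0 hoff hcount hd hxd)
  rw [inner_sub_left, hβτ] at hcross
  have hcoef : M * Real.sqrt ρτ / (2 * Real.sqrt τ) * τ * ‖x ((k : ℤ) + 1) (jj k) - x k (jj k)‖ ^ 2
      = M * Real.sqrt ((ρτ : ℝ) * τ) / 2 * ‖x ((k : ℤ) + 1) (jj k) - x k (jj k)‖ ^ 2 := by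
    rw [Real.sqrt_mul (Nat.cast_nonneg _)]
    field_simp
    rw [hβτ]
  have hγ : 1 / (2 * γ) * ‖x ((k : ℤ) + 1) (jj k) - x k (jj k)‖ ^ 2
      = 1 / 2 * (1 / γ) * ‖x ((k : ℤ) + 1) (jj k) - x k (jj k)‖ ^ 2 := by ring
  rw [hΦ, hΦ, hΨ, hΨ, Nat.cast_succ, sum_apply_succ hoff, ← add_sum_erase _ _ (mem_univ (jj k))]
  refine EReal.add_add_le_sub_of_le ?_ hprox
  rw [weighted_window_succ hoff hκ k]
  linarith

end Iteration

theorem stmt_0_general {m : ℕ} (H : Fin m → Type*) [∀ j, NormedAddCommGroup (H j)]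
    [∀ j, InnerProductSpace ℝ (H j)] [∀ j, FiniteDimensional ℝ (H j)]
    -- f is C¹
    (f : (∀ j, H j) → ℝ) (hf : ContDiff ℝ 1 f)
    (r : ∀ j, H j → EReal)
    -- Ψ = f + Σ_j r_j, bounded below
    (Ψ : (∀ j, H j) → EReal) (hΨ : ∀ x, Ψ x = (f x : EReal) + ∑ j, r j (x j))
    -- parameters
    (τ ρτ : ℕ) (hτ : 1 ≤ τ) (hρτ1 : 1 ≤ ρτ)
    (c M L γmin : ℝ) (hc0 : 0 < c) (hc1 : c < 1) (hM : 0 < M) (hL : 0 < L)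
    (hγmin : 0 < γmin)
    -- the iterates, extended by x^h = x^0 for h ≤ 0
    (x : ℤ → ∀ j, H j) (hx0 : ∀ h : ℤ, h ≤ 0 → x h = x 0)
    -- active blocks and delays
    (jj : ℕ → Fin m) (d : ℕ → Fin m → ℕ) (hd : ∀ k j, d k j ≤ τ)
    (hcount : ∀ (k : ℕ) (j : Fin m),
      Set.ncard {h : ℕ | k - τ ≤ h ∧ h ≤ k ∧ jj h = j} ≤ ρτ)
    -- the delayed iterate x^{k-d_k}
    (xd : ℕ → ∀ j, H j) (hxd : ∀ (k : ℕ) (j : Fin m), xd k j = x ((k : ℤ) - d k j) j)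
    -- stepsizes
    (γ : ℕ → ℝ)
    (hγ : ∀ k, γmin ≤ γ k ∧ γ k ≤ c / (L + 2 * M * Real.sqrt ((ρτ : ℝ) * τ)))
    -- the update: only block j_k moves, and it moves to a minimizer of the prox-subproblem
    (hoff : ∀ (k : ℕ) (j : Fin m), j ≠ jj k → x ((k : ℤ) + 1) j = x k j)
    (hprox : ∀ (k : ℕ) (y : H (jj k)),
      r (jj k) (x ((k : ℤ) + 1) (jj k)) +
        ((⟪pgrad f (xd k) (jj k) (xd k (jj k)), x ((k : ℤ) + 1) (jj k) - x k (jj k)⟫ +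
            (1 / (2 * γ k)) * ‖x ((k : ℤ) + 1) (jj k) - x k (jj k)‖ ^ 2 : ℝ) : EReal) ≤
      r (jj k) y +
        ((⟪pgrad f (xd k) (jj k) (xd k (jj k)), y - x k (jj k)⟫ +
            (1 / (2 * γ k)) * ‖y - x k (jj k)‖ ^ 2 : ℝ) : EReal))
    -- (i) partial-gradient Lipschitz moduli, bounded by L
    (Lip : ℕ → Fin m → ℝ)
    (hLip : ∀ (k : ℕ) (j : Fin m) (y y' : H j),
      ‖pgrad f (x k) j y - pgrad f (x k) j y'‖ ≤ Lip k j * ‖y - y'‖)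
    (hLipL : ∀ k j, Lip k j ≤ L)
    -- (ii) delayed-gradient bound
    (hMd : ∀ k : ℕ,
      ‖pgrad f (x k) (jj k) (x k (jj k)) - pgrad f (xd k) (jj k) (xd k (jj k))‖ ≤
        M * Real.sqrt (sqNorm (x k - xd k)))
    -- κ_k, the Lyapunov value Φ_k, and the constant C
    (κ : ℕ → ℝ)
    (hκ : ∀ k : ℕ, κ k = (M * Real.sqrt ρτ / (2 * Real.sqrt τ)) *
      ∑ i ∈ Finset.range τ,
        ((i : ℝ) + 1) * sqNorm (x ((k : ℤ) - τ + 1 + i) - x ((k : ℤ) - τ + i)))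
    (Φ : ℕ → EReal) (hΦ : ∀ k : ℕ, Φ k = Ψ (x k) + (κ k : EReal))
    (C : ℝ) (hC : C = (1 / 2) * (1 / c - 1) * (L + 2 * M * Real.sqrt ((ρτ : ℝ) * τ))) :
    (∀ k : ℕ, Φ (k + 1) ≤ Φ k -
      (((1 / 2) * (1 / γ k - Lip k (jj k) - 2 * M * Real.sqrt ((ρτ : ℝ) * τ)) *
          ‖x ((k : ℤ) + 1) (jj k) - x k (jj k)‖ ^ 2 : ℝ) : EReal)) ∧
    0 < C ∧
    ∀ k : ℕ, Φ (k + 1) ≤ Φ k - ((C * sqNorm (x ((k : ℤ) + 1) - x k) : ℝ) : EReal) := by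
  have hγ_pos : ∀ k, 0 < γ k := fun k => hγmin.trans_le (hγ k).1
  have hLA : 0 < L + 2 * M * Real.sqrt ((ρτ : ℝ) * τ) := by positivity
  have step := fun k : ℕ =>
    lyapunov_step (hf.differentiable one_ne_zero) hΨ hτ hρτ1 hM.le hx0 hoff (hd k) (hcount k)
      (hxd k) (γ := γ k) (by simpa using hprox k (x k (jj k))) (hLip k (jj k)) (hMd k) hκ hΦ
  refine ⟨step, ?_, fun k => (step k).trans ?_⟩
  · rw [hC]
    have := one_lt_one_div hc0 hc1
    positivity
  · rw [sqNorm_succ_sub hoff k, hC]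
    have hCle := half_mul_one_div_sub_one_le hc0 (hγ_pos k) hLA (hγ k).2 (hLipL k (jj k))
    exact EReal.sub_le_sub le_rfl (EReal.coe_le_coe_iff.2 (by gcongr))

theorem stmt_0 {m : ℕ} (hm : 1 ≤ m)
    (H : Fin m → Type*) [∀ j, NormedAddCommGroup (H j)]
    [∀ j, InnerProductSpace ℝ (H j)] [∀ j, FiniteDimensional ℝ (H j)]
    -- f is C¹
    (f : (∀ j, H j) → ℝ) (hf : ContDiff ℝ 1 f)
    -- each r_j is proper and lower semicontinuous with values in (−∞, +∞]
    (r : ∀ j, H j → EReal)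
    (hr_ne_top : ∀ j, ∃ y, r j y ≠ ⊤) (hr_ne_bot : ∀ j y, r j y ≠ ⊥)
    (hr_lsc : ∀ j, LowerSemicontinuous (r j))
    -- Ψ = f + Σ_j r_j, bounded below
    (Ψ : (∀ j, H j) → EReal) (hΨ : ∀ x, Ψ x = (f x : EReal) + ∑ j, r j (x j))
    (hΨbdd : ∃ B : ℝ, ∀ x, (B : EReal) ≤ Ψ x)
    -- parameters
    (τ ρτ : ℕ) (hτ : 1 ≤ τ) (hρτ1 : 1 ≤ ρτ) (hρττ : ρτ ≤ τ)
    (c M L γmin : ℝ) (hc0 : 0 < c) (hc1 : c < 1) (hM : 0 < M) (hL : 0 < L)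
    (hγmin : 0 < γmin)
    -- the iterates, extended by x^h = x^0 for h ≤ 0
    (x : ℤ → ∀ j, H j) (hx0 : ∀ h : ℤ, h ≤ 0 → x h = x 0)
    (hΨx0 : Ψ (x 0) < ⊤)
    -- active blocks and delays
    (jj : ℕ → Fin m) (d : ℕ → Fin m → ℕ) (hd : ∀ k j, d k j ≤ τ)
    (hcount : ∀ (k : ℕ) (j : Fin m),
      Set.ncard {h : ℕ | k - τ ≤ h ∧ h ≤ k ∧ jj h = j} ≤ ρτ)
    -- the delayed iterate x^{k-d_k}
    (xd : ℕ → ∀ j, H j) (hxd : ∀ (k : ℕ) (j : Fin m), xd k j = x ((k : ℤ) - d k j) j)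
    -- stepsizes
    (γ : ℕ → ℝ)
    (hγ : ∀ k, γmin ≤ γ k ∧ γ k ≤ c / (L + 2 * M * Real.sqrt ((ρτ : ℝ) * τ)))
    -- the update: only block j_k moves, and it moves to a minimizer of the prox-subproblem
    (hoff : ∀ (k : ℕ) (j : Fin m), j ≠ jj k → x ((k : ℤ) + 1) j = x k j)
    (hprox : ∀ (k : ℕ) (y : H (jj k)),
      r (jj k) (x ((k : ℤ) + 1) (jj k)) +
        ((⟪pgrad f (xd k) (jj k) (xd k (jj k)), x ((k : ℤ) + 1) (jj k) - x k (jj k)⟫ +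
            (1 / (2 * γ k)) * ‖x ((k : ℤ) + 1) (jj k) - x k (jj k)‖ ^ 2 : ℝ) : EReal) ≤
      r (jj k) y +
        ((⟪pgrad f (xd k) (jj k) (xd k (jj k)), y - x k (jj k)⟫ +
            (1 / (2 * γ k)) * ‖y - x k (jj k)‖ ^ 2 : ℝ) : EReal))
    -- (i) partial-gradient Lipschitz moduli, bounded by L
    (Lip : ℕ → Fin m → ℝ)
    (hLip : ∀ (k : ℕ) (j : Fin m) (y y' : H j),
      ‖pgrad f (x k) j y - pgrad f (x k) j y'‖ ≤ Lip k j * ‖y - y'‖)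
    (hLipL : ∀ k j, Lip k j ≤ L)
    -- (ii) delayed-gradient bound
    (hMd : ∀ k : ℕ,
      ‖pgrad f (x k) (jj k) (x k (jj k)) - pgrad f (xd k) (jj k) (xd k (jj k))‖ ≤
        M * Real.sqrt (sqNorm (x k - xd k)))
    -- κ_k, the Lyapunov value Φ_k, and the constant C
    (κ : ℕ → ℝ)
    (hκ : ∀ k : ℕ, κ k = (M * Real.sqrt ρτ / (2 * Real.sqrt τ)) *
      ∑ i ∈ Finset.range τ,
        ((i : ℝ) + 1) * sqNorm (x ((k : ℤ) - τ + 1 + i) - x ((k : ℤ) - τ + i)))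
    (Φ : ℕ → EReal) (hΦ : ∀ k : ℕ, Φ k = Ψ (x k) + (κ k : EReal))
    (C : ℝ) (hC : C = (1 / 2) * (1 / c - 1) * (L + 2 * M * Real.sqrt ((ρτ : ℝ) * τ))) :
    (∀ k : ℕ, Φ (k + 1) ≤ Φ k -
      (((1 / 2) * (1 / γ k - Lip k (jj k) - 2 * M * Real.sqrt ((ρτ : ℝ) * τ)) *
          ‖x ((k : ℤ) + 1) (jj k) - x k (jj k)‖ ^ 2 : ℝ) : EReal)) ∧
    0 < C ∧
    ∀ k : ℕ, Φ (k + 1) ≤ Φ k - ((C * sqNorm (x ((k : ℤ) + 1) - x k) : ℝ) : EReal) :=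
  stmt_0_general H f hf r Ψ hΨ τ ρτ hτ hρτ1 c M L γmin hc0 hc1 hM hL hγmin x hx0 jj d hd hcount xd
    hxd γ hγ hoff hprox Lip hLip hLipL hMd κ hκ Φ hΦ C hC
end

section
/- Fix k ≥ 0, ρ ∈ ℕ and τ ≥ 1, and suppose that for every block j the number of indices h ∈ {k−τ+1,…,k} with x_j^h ≠ x_j^{h−1} is at most ρ. Then for every delay vector d ∈ {0,…,τ}^m, writing x^{k−d} for the vector whose j-th block is x_j^{k−d_j}, one has ‖x^k − x^{k−d}‖² ≤ ρ Σ_{h=k−τ+1}^{k} ‖x^h − x^{h−1}‖². -/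
/-!
Block by block, `x_j^k - x_j^{k-d_j}` telescopes into at most `τ` consecutive differences
`x_j^h - x_j^{h-1}` with `h` in the window `{k-τ+1, …, k}`, of which at most `ρ` are nonzero.
Cauchy–Schwarz over the nonzero terms bounds its squared norm by `ρ` times the sum of their squared
norms, which is at most the sum over the whole window; summing over the blocks gives the claim.
-/

open Finset

theorem norm_sum_sq_le_card_filter_ne_zero_mul {ι E : Type*} [SeminormedAddCommGroup E]
    (s : Finset ι) (v : ι → E) [DecidablePred fun i => v i ≠ 0] :
    ‖∑ i ∈ s, v i‖ ^ 2 ≤ #(s.filter fun i => v i ≠ 0) * ∑ i ∈ s, ‖v i‖ ^ 2 := by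
  set t := s.filter fun i => v i ≠ 0
  calc ‖∑ i ∈ s, v i‖ ^ 2
      = ‖∑ i ∈ t, v i‖ ^ 2 := by rw [sum_filter_ne_zero]
    _ ≤ (∑ i ∈ t, ‖v i‖) ^ 2 := by gcongr; exact norm_sum_le _ _
    _ ≤ #t * ∑ i ∈ t, ‖v i‖ ^ 2 := sq_sum_le_card_mul_sum_sq
    _ ≤ #t * ∑ i ∈ s, ‖v i‖ ^ 2 := by gcongr; exact filter_subset _ _

theorem Int.sum_Ioc_sub_eq_sub {G : Type*} [AddCommGroup G] (f : ℤ → G) {a b : ℤ} (hab : a ≤ b) :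
    ∑ h ∈ Ioc a b, (f h - f (h - 1)) = f b - f a := by
  induction b, hab using Int.leInduction with
  | base => simp
  | succ b hab ih =>
    rw [← insert_Ioc_right_eq_Ioc_add_one hab, sum_insert (by simp), ih, add_sub_cancel_right]
    abel

theorem norm_sub_sq_le_card_jumps_mul {E : Type*} [SeminormedAddCommGroup E] [DecidableEq E]
    (y : ℤ → E) {a b c : ℤ} (hac : a ≤ c) (hcb : c ≤ b) :
    ‖y b - y c‖ ^ 2 ≤
      #((Ioc a b).filter fun h => y h ≠ y (h - 1)) * ∑ h ∈ Ioc a b, ‖y h - y (h - 1)‖ ^ 2 := by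
  calc ‖y b - y c‖ ^ 2
      = ‖∑ h ∈ Ioc c b, (y h - y (h - 1))‖ ^ 2 := by rw [Int.sum_Ioc_sub_eq_sub y hcb]
    _ ≤ #((Ioc c b).filter fun h => y h - y (h - 1) ≠ 0) *
          ∑ h ∈ Ioc c b, ‖y h - y (h - 1)‖ ^ 2 := norm_sum_sq_le_card_filter_ne_zero_mul _ _
    _ ≤ #((Ioc a b).filter fun h => y h ≠ y (h - 1)) * ∑ h ∈ Ioc a b, ‖y h - y (h - 1)‖ ^ 2 := by
        simp only [sub_ne_zero]
        gcongr

theorem stmt_6_general {m : ℕ} (H : Fin m → Type*) [∀ j, NormedAddCommGroup (H j)]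
    (x : ℤ → ∀ j, H j)
    (k : ℕ) (ρ τ : ℕ)
    -- each block changes at most ρ times among h ∈ {k-τ+1, …, k}
    (hcount : ∀ j : Fin m,
      Set.ncard {h : ℤ | h ∈ Set.Icc ((k : ℤ) - τ + 1) (k : ℤ) ∧ x h j ≠ x (h - 1) j} ≤ ρ)
    (d : Fin m → ℕ) (hd : ∀ j, d j ≤ τ) :
    ∑ j, ‖x k j - x ((k : ℤ) - d j) j‖ ^ 2 ≤
      (ρ : ℝ) * ∑ h ∈ Finset.Icc ((k : ℤ) - τ + 1) (k : ℤ), ∑ j, ‖x h j - x (h - 1) j‖ ^ 2 := by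
  classical
  have hblock : ∀ j, ‖x k j - x ((k : ℤ) - d j) j‖ ^ 2 ≤
      (ρ : ℝ) * ∑ h ∈ Icc ((k : ℤ) - τ + 1) k, ‖x h j - x (h - 1) j‖ ^ 2 := by
    intro j
    have hjumps : #((Ioc ((k : ℤ) - τ) k).filter fun h => x h j ≠ x (h - 1) j) ≤ ρ := by
      rw [← Icc_add_one_left_eq_Ioc, ← Set.ncard_coe_finset, coe_filter]
      simpa only [mem_Icc, Set.mem_Icc] using hcount j
    have hdj := hd j
    rw [Icc_add_one_left_eq_Ioc]
    calc _ ≤ _ := norm_sub_sq_le_card_jumps_mul (fun h => x h j) (a := (k : ℤ) - τ)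
          (by omega) (by omega)
      _ ≤ _ := by gcongr
  calc ∑ j, ‖x k j - x ((k : ℤ) - d j) j‖ ^ 2
      ≤ ∑ j, (ρ : ℝ) * ∑ h ∈ Icc ((k : ℤ) - τ + 1) k, ‖x h j - x (h - 1) j‖ ^ 2 :=
        sum_le_sum fun j _ => hblock j
    _ = _ := by rw [← mul_sum, sum_comm]

theorem stmt_6 {m : ℕ} (H : Fin m → Type*) [∀ j, NormedAddCommGroup (H j)]
    [∀ j, InnerProductSpace ℝ (H j)]
    -- the sequence, extended by x^h = x^0 for h ≤ 0
    (x : ℤ → ∀ j, H j) (hx0 : ∀ h : ℤ, h ≤ 0 → x h = x 0)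
    (k : ℕ) (ρ τ : ℕ) (hτ : 1 ≤ τ)
    -- each block changes at most ρ times among h ∈ {k-τ+1, …, k}
    (hcount : ∀ j : Fin m,
      Set.ncard {h : ℤ | h ∈ Set.Icc ((k : ℤ) - τ + 1) (k : ℤ) ∧ x h j ≠ x (h - 1) j} ≤ ρ)
    (d : Fin m → ℕ) (hd : ∀ j, d j ≤ τ) :
    ∑ j, ‖x k j - x ((k : ℤ) - d j) j‖ ^ 2 ≤
      (ρ : ℝ) * ∑ h ∈ Finset.Icc ((k : ℤ) - τ + 1) (k : ℤ), ∑ j, ‖x h j - x (h - 1) j‖ ^ 2 :=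
  stmt_6_general H x k ρ τ hcount d hd
end

section
/- Let 0 < γ_min ≤ γ_q ≤ γ_max < ∞ for all q, let {g_q} be a bounded sequence in E, and let u_q → x̄ and y_q → x̄ in E. If for every q the point y_q minimizes y ↦ r(y) + ⟨g_q, y − u_q⟩ + (1/(2γ_q))‖y − u_q‖² over E, then r(y_q) → r(x̄) in the extended reals. -/
/-! The minimality of `y q` tested against the competitor `x̄` gives
`r (y q) ≤ r x̄ + φ_q(x̄) - φ_q(y q)`, where `φ_q(z) = ⟪g q, z - u q⟫ + ‖z - u q‖² / (2 γ q)`.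
Both model values tend to `0`, because `g q` and `1 / (2 γ q)` stay bounded while `x̄ - u q` and
`y q - u q` tend to `0`; hence `limsup r (y q) ≤ r x̄`, and lower semicontinuity supplies the
reverse inequality for the `liminf`. -/

open Filter Topology RealInnerProductSpace

theorem LowerSemicontinuousAt.tendsto_of_eventually_le {X ι β : Type*} [TopologicalSpace X]
    [LinearOrder β] [TopologicalSpace β] [OrderTopology β] {r : X → β} {x : X} {l : Filter ι}
    {y : ι → X} {b : ι → β} (hr : LowerSemicontinuousAt r x) (hy : Tendsto y l (𝓝 x))
    (hle : ∀ᶠ i in l, r (y i) ≤ b i) (hb : Tendsto b l (𝓝 (r x))) :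
    Tendsto (fun i => r (y i)) l (𝓝 (r x)) :=
  tendsto_order.2
    ⟨fun a ha => hy.eventually (hr a ha),
     fun a ha => (hle.and ((tendsto_order.1 hb).2 a ha)).mono fun _ h => h.1.trans_lt h.2⟩

theorem EReal.tendsto_add_coe_of_tendsto_zero {ι : Type*} {l : Filter ι} (A : EReal) {e : ι → ℝ}
    (he : Tendsto e l (𝓝 0)) : Tendsto (fun i => A + (e i : EReal)) l (𝓝 A) := by
  have hcont : ContinuousAt (fun p : EReal × EReal => p.1 + p.2) (A, 0) :=
    EReal.continuousAt_add (Or.inr EReal.zero_ne_bot) (Or.inr EReal.zero_ne_top)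
  simpa only [add_zero, Function.comp_def] using hcont.tendsto.comp
    (tendsto_const_nhds.prodMk_nhds (EReal.tendsto_coe.2 he : Tendsto _ l (𝓝 ((0 : ℝ) : EReal))))

theorem EReal.le_add_sub_of_add_le {a b : EReal} {c d : ℝ} (h : a + c ≤ b + d) :
    a ≤ b + ((d - c : ℝ) : EReal) := by
  induction b with
  | bot => simpa using h
  | top => exact le_top.trans_eq (EReal.top_add_coe _).symm
  | coe b =>
    have hsub : a ≤ (b : EReal) + d - c :=
      (EReal.le_sub_iff_add_le (Or.inl (EReal.coe_ne_bot c)) (Or.inl (EReal.coe_ne_top c))).2 h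
    rw [add_sub_assoc] at hsub
    exact_mod_cast hsub

theorem tendsto_inner_add_mul_norm_sq_of_tendsto_zero {ι E : Type*} [NormedAddCommGroup E]
    [InnerProductSpace ℝ E] {l : Filter ι} {g v : ι → E} {c : ι → ℝ}
    (hg : IsBoundedUnder (· ≤ ·) l (norm ∘ g)) (hc : IsBoundedUnder (· ≤ ·) l (norm ∘ c))
    (hv : Tendsto v l (𝓝 0)) :
    Tendsto (fun i => ⟪g i, v i⟫ + c i * ‖v i‖ ^ 2) l (𝓝 0) := by
  have hinner : Tendsto (fun i => ⟪g i, v i⟫) l (𝓝 0) :=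
    hv.op_zero_isBoundedUnder_le hg (fun v g => ⟪g, v⟫) fun v g =>
      (norm_inner_le_norm g v).trans_eq (mul_comm _ _)
  have hsq : Tendsto (fun i => ‖v i‖ ^ 2) l (𝓝 0) := by simpa using hv.norm.pow 2
  simpa using hinner.add (isBoundedUnder_le_mul_tendsto_zero hc hsq)

theorem stmt_7_general {E : Type*} [NormedAddCommGroup E] [InnerProductSpace ℝ E]
    -- r is proper and lower semicontinuous with values in (−∞, +∞]
    (r : E → EReal)
    (hlsc : LowerSemicontinuous r)
    (γmin γmax : ℝ) (hγmin : 0 < γmin) (γ : ℕ → ℝ)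
    (hγ : ∀ q, γmin ≤ γ q ∧ γ q ≤ γmax)
    (g : ℕ → E) (hg : Bornology.IsBounded (Set.range g))
    (u y : ℕ → E) (xbar : E)
    (hu : Tendsto u atTop (nhds xbar)) (hy : Tendsto y atTop (nhds xbar))
    -- each y_q minimizes the prox-subproblem
    (hmin : ∀ (q : ℕ) (z : E),
      r (y q) + ((⟪g q, y q - u q⟫ + (1 / (2 * γ q)) * ‖y q - u q‖ ^ 2 : ℝ) : EReal) ≤
      r z + ((⟪g q, z - u q⟫ + (1 / (2 * γ q)) * ‖z - u q‖ ^ 2 : ℝ) : EReal)) :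
    Tendsto (fun q => r (y q)) atTop (nhds (r xbar)) := by
  set φ : ℕ → E → ℝ := fun q z => ⟪g q, z - u q⟫ + (1 / (2 * γ q)) * ‖z - u q‖ ^ 2
  obtain ⟨M, hM⟩ := hg.exists_norm_le
  have hg_bdd : IsBoundedUnder (· ≤ ·) atTop (norm ∘ g) :=
    isBoundedUnder_of ⟨M, fun q => hM _ (Set.mem_range_self q)⟩
  have hcoef_bdd : IsBoundedUnder (· ≤ ·) atTop (norm ∘ fun q => 1 / (2 * γ q)) := by
    refine isBoundedUnder_of ⟨1 / (2 * γmin), fun q => ?_⟩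
    have hγq : 0 < γ q := hγmin.trans_le (hγ q).1
    rw [Function.comp_apply, Real.norm_of_nonneg (by positivity)]
    exact one_div_le_one_div_of_le (by positivity) (by linarith [(hγ q).1])
  have hφ_tendsto : ∀ w : ℕ → E, Tendsto w atTop (𝓝 xbar) →
      Tendsto (fun q => φ q (w q)) atTop (𝓝 0) := fun w hw =>
    tendsto_inner_add_mul_norm_sq_of_tendsto_zero hg_bdd hcoef_bdd (by simpa using hw.sub hu)
  refine LowerSemicontinuousAt.tendsto_of_eventually_le (hlsc xbar) hy
    (Eventually.of_forall fun q => EReal.le_add_sub_of_add_le (hmin q xbar)) ?_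
  exact EReal.tendsto_add_coe_of_tendsto_zero (r xbar) <| by
    simpa only [sub_zero] using (hφ_tendsto _ tendsto_const_nhds).sub (hφ_tendsto y hy)

theorem stmt_7 {E : Type*} [NormedAddCommGroup E] [InnerProductSpace ℝ E]
    [FiniteDimensional ℝ E]
    -- r is proper and lower semicontinuous with values in (−∞, +∞]
    (r : E → EReal) (hproper : ∃ z, r z ≠ ⊤) (hbot : ∀ z, r z ≠ ⊥)
    (hlsc : LowerSemicontinuous r)
    (γmin γmax : ℝ) (hγmin : 0 < γmin) (γ : ℕ → ℝ)
    (hγ : ∀ q, γmin ≤ γ q ∧ γ q ≤ γmax)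
    (g : ℕ → E) (hg : Bornology.IsBounded (Set.range g))
    (u y : ℕ → E) (xbar : E)
    (hu : Tendsto u atTop (nhds xbar)) (hy : Tendsto y atTop (nhds xbar))
    -- each y_q minimizes the prox-subproblem
    (hmin : ∀ (q : ℕ) (z : E),
      r (y q) + ((⟪g q, y q - u q⟫ + (1 / (2 * γ q)) * ‖y q - u q‖ ^ 2 : ℝ) : EReal) ≤
      r z + ((⟪g q, z - u q⟫ + (1 / (2 * γ q)) * ‖z - u q‖ ^ 2 : ℝ) : EReal)) :
    Tendsto (fun q => r (y q)) atTop (nhds (r xbar)) :=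
  stmt_7_general r hlsc γmin γmax hγmin γ hγ g hg u y xbar hu hy hmin
end

section
/- Let T ≥ 1 be an integer, let b_1, …, b_T be nonnegative reals with Σ_{i=1}^T b_i < 1, let {ε_k}_{k∈ℕ} be a summable sequence of nonnegative reals, and let {a_k}_{k∈ℕ} be nonnegative reals (extended by a_h := a_0 for h ≤ 0) such that a_{k+1} ≤ Σ_{i=1}^T b_i a_{k+1−i} + ε_k for every k ∈ ℕ. Then Σ_{k=0}^∞ a_k < ∞. -/
/-!
Let `S n = ∑_{k<n} a k` and `B = ∑ b i < 1`. Summing the recursion over `k < n`, every lagged sum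
`∑_{k<n} a (k + 1 - i)` is at most `S n` plus `T` copies of `a 0` (the truncated indices),
so `S (n + 1) ≤ a 0 + B (T a 0 + S (n + 1)) + ∑ ε`. Since `B < 1` this bounds `S` uniformly,
and a nonnegative sequence with bounded partial sums is summable.
-/

open Finset

theorem sum_range_comp_sub_le {a : ℕ → ℝ} (ha : ∀ k, 0 ≤ a k) (j N : ℕ) :
    ∑ k ∈ range N, a (k - j) ≤ j * a 0 + ∑ k ∈ range N, a k := by
  induction j generalizing N with
  | zero => simp
  | succ j ih =>
    cases N with
    | zero => simpa using mul_nonneg (by positivity : (0 : ℝ) ≤ j + 1) (ha 0)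
    | succ N =>
      calc ∑ k ∈ range (N + 1), a (k - (j + 1))
          = ∑ k ∈ range N, a (k - j) + a 0 := by simp [sum_range_succ']
        _ ≤ j * a 0 + ∑ k ∈ range N, a k + a 0 := by gcongr; exact ih N
        _ ≤ ((j + 1 : ℕ) : ℝ) * a 0 + ∑ k ∈ range (N + 1), a k := by
          rw [sum_range_succ]; push_cast; linarith [ha N]

theorem sum_range_sum_Icc_mul_lag_le {a b : ℕ → ℝ} (ha : ∀ k, 0 ≤ a k) {T : ℕ}
    (hb : ∀ i ∈ Icc 1 T, 0 ≤ b i) (n : ℕ) :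
    ∑ k ∈ range n, ∑ i ∈ Icc 1 T, b i * a (k + 1 - i)
      ≤ (∑ i ∈ Icc 1 T, b i) * (T * a 0 + ∑ k ∈ range n, a k) := by
  rw [sum_comm, sum_mul]
  refine sum_le_sum fun i hi => ?_
  obtain ⟨hi1, hiT⟩ := mem_Icc.mp hi
  rw [← mul_sum]
  gcongr
  · exact hb i hi
  calc ∑ k ∈ range n, a (k + 1 - i)
      = ∑ k ∈ range n, a (k - (i - 1)) := sum_congr rfl fun k _ => by congr 1; omega
    _ ≤ ((i - 1 : ℕ) : ℝ) * a 0 + ∑ k ∈ range n, a k := sum_range_comp_sub_le ha _ n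
    _ ≤ T * a 0 + ∑ k ∈ range n, a k := by
      gcongr
      · exact ha 0
      · omega

theorem stmt_9_general (T : ℕ)
    (b : ℕ → ℝ) (hb : ∀ i ∈ Finset.Icc 1 T, 0 ≤ b i)
    (hbsum : ∑ i ∈ Finset.Icc 1 T, b i < 1)
    (ε : ℕ → ℝ) (hε0 : ∀ k, 0 ≤ ε k) (hεsum : Summable ε)
    (a : ℕ → ℝ) (ha0 : ∀ k, 0 ≤ a k)
    -- recursion; note `k + 1 - i` is truncated subtraction, matching the
    -- convention a_h := a_0 for h ≤ 0
    (hrec : ∀ k : ℕ, a (k + 1) ≤ ∑ i ∈ Finset.Icc 1 T, b i * a (k + 1 - i) + ε k) :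
    Summable a := by
  set B := ∑ i ∈ Icc 1 T, b i
  have hB0 : 0 ≤ B := sum_nonneg hb
  refine summable_of_sum_range_le ha0 (c := (a 0 + B * (T * a 0) + ∑' k, ε k) / (1 - B))
    fun n => ?_
  have hmono : ∑ k ∈ range n, a k ≤ ∑ k ∈ range (n + 1), a k := by
    rw [sum_range_succ]; linarith [ha0 n]
  have hstep : ∑ k ∈ range (n + 1), a k
      ≤ a 0 + B * (T * a 0 + ∑ k ∈ range (n + 1), a k) + ∑' k, ε k :=
    calc ∑ k ∈ range (n + 1), a k = a 0 + ∑ k ∈ range n, a (k + 1) := by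
          rw [sum_range_succ', add_comm]
      _ ≤ a 0 + (∑ k ∈ range n, ∑ i ∈ Icc 1 T, b i * a (k + 1 - i) + ∑ k ∈ range n, ε k) := by
          rw [← sum_add_distrib]; gcongr with k; exact hrec k
      _ ≤ a 0 + (B * (T * a 0 + ∑ k ∈ range n, a k) + ∑' k, ε k) := by
          gcongr
          · exact sum_range_sum_Icc_mul_lag_le ha0 hb n
          · exact hεsum.sum_le_tsum _ fun k _ => hε0 k
      _ ≤ a 0 + B * (T * a 0 + ∑ k ∈ range (n + 1), a k) + ∑' k, ε k := by
          rw [← add_assoc]; gcongr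
  rw [le_div_iff₀ (by linarith)]
  nlinarith [mul_le_mul_of_nonneg_left hmono hB0]

theorem stmt_9 (T : ℕ) (hT : 1 ≤ T)
    (b : ℕ → ℝ) (hb : ∀ i ∈ Finset.Icc 1 T, 0 ≤ b i)
    (hbsum : ∑ i ∈ Finset.Icc 1 T, b i < 1)
    (ε : ℕ → ℝ) (hε0 : ∀ k, 0 ≤ ε k) (hεsum : Summable ε)
    (a : ℕ → ℝ) (ha0 : ∀ k, 0 ≤ a k)
    -- recursion; note `k + 1 - i` is truncated subtraction, matching the
    -- convention a_h := a_0 for h ≤ 0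
    (hrec : ∀ k : ℕ, a (k + 1) ≤ ∑ i ∈ Finset.Icc 1 T, b i * a (k + 1 - i) + ε k) :
    Summable a :=
  stmt_9_general T b hb hbsum ε hε0 hεsum a ha0 hrec
end

section
/- If {a_k}_{k∈ℕ} is a summable sequence of nonnegative real numbers, then (k+1)·min_{0≤t≤k} a_t → 0 as k → ∞; that is, min_{0≤t≤k} a_t = o(1/(k+1)). -/
/-!
If the minimum of `a₀, …, a_k` is `m`, then each of the last `k + 1 - ⌊k/2⌋ ≥ (k + 1)/2` terms is
at least `m`, so `(k + 1) m` is at most twice the tail `∑_{i ≥ ⌊k/2⌋} aᵢ`, which tends to `0`.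
-/

open Filter Finset Topology

section

variable {a : ℕ → ℝ}

lemma sum_Ico_le_tsum_nat_add (ha : ∀ k, 0 ≤ a k) (hsum : Summable a) (N M : ℕ) :
    ∑ i ∈ Ico N M, a i ≤ ∑' i, a (i + N) := by
  rw [sum_Ico_eq_sum_range]
  simp_rw [add_comm N]
  exact ((summable_nat_add_iff N).mpr hsum).sum_le_tsum _ fun i _ => ha _

lemma card_mul_inf'_range_le_tsum_nat_add (ha : ∀ k, 0 ≤ a k) (hsum : Summable a) (k N : ℕ) :
    ((k + 1 - N : ℕ) : ℝ) * (range (k + 1)).inf' nonempty_range_add_one a ≤ ∑' i, a (i + N) := by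
  have hmin : ∀ i ∈ Ico N (k + 1), (range (k + 1)).inf' nonempty_range_add_one a ≤ a i :=
    fun i hi => inf'_le a (mem_range.mpr (mem_Ico.mp hi).2)
  calc ((k + 1 - N : ℕ) : ℝ) * (range (k + 1)).inf' nonempty_range_add_one a
      ≤ ∑ i ∈ Ico N (k + 1), a i := by
        simpa only [Nat.card_Ico, nsmul_eq_mul] using card_nsmul_le_sum _ a _ hmin
    _ ≤ ∑' i, a (i + N) := sum_Ico_le_tsum_nat_add ha hsum N (k + 1)

lemma succ_mul_inf'_range_le_two_mul_tsum (ha : ∀ k, 0 ≤ a k) (hsum : Summable a) (k : ℕ) :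
    ((k : ℝ) + 1) * (range (k + 1)).inf' nonempty_range_add_one a ≤ 2 * ∑' i, a (i + k / 2) := by
  have hmin : 0 ≤ (range (k + 1)).inf' nonempty_range_add_one a := le_inf' _ _ fun i _ => ha i
  have hcard : ((k : ℝ) + 1) ≤ 2 * ((k + 1 - k / 2 : ℕ) : ℝ) := by
    exact_mod_cast (by omega : k + 1 ≤ 2 * (k + 1 - k / 2))
  calc ((k : ℝ) + 1) * (range (k + 1)).inf' nonempty_range_add_one a
      ≤ 2 * (((k + 1 - k / 2 : ℕ) : ℝ) * (range (k + 1)).inf' nonempty_range_add_one a) := by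
        rw [← mul_assoc]; exact mul_le_mul_of_nonneg_right hcard hmin
    _ ≤ 2 * ∑' i, a (i + k / 2) := by
        gcongr; exact card_mul_inf'_range_le_tsum_nat_add ha hsum k (k / 2)

end

theorem stmt_10 (a : ℕ → ℝ) (ha : ∀ k, 0 ≤ a k) (hsum : Summable a) :
    Filter.Tendsto
      (fun k : ℕ => ((k : ℝ) + 1) * ((Finset.range (k + 1)).inf' Finset.nonempty_range_add_one a))
      Filter.atTop (nhds 0) := by
  have htail : Tendsto (fun k : ℕ => 2 * ∑' i, a (i + k / 2)) atTop (𝓝 0) := by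
    simpa using ((tendsto_sum_nat_add a).comp (Nat.tendsto_div_const_atTop two_ne_zero)).const_mul 2
  refine squeeze_zero (fun k => ?_) (succ_mul_inf'_range_le_two_mul_tsum ha hsum) htail
  exact mul_nonneg (by positivity) (le_inf' _ _ fun i _ => ha i)
end

section
/- Let {x^k} be a sequence in E, let {Φ_k} be a nonincreasing sequence of reals with limit Φ*, let C, c₀ > 0, T ≥ 1, k₀ ∈ ℕ, η > 0 and φ ∈ F_η. Assume: (a) Φ_k − Φ_{k+1} ≥ C‖x^{k+1} − x^k‖² for all k ∈ ℕ; (b) Φ* < Φ_k < Φ* + η for all k ≥ k₀; (c) φ′(Φ_k − Φ*) · c₀ Σ_{h=k−T}^{k−1} ‖x^{h+1} − x^h‖ ≥ 1 for all k ≥ k₀ (with the convention x^h := x^0 for h ≤ 0). Then the sequence has finite length, Σ_{k=0}^∞ ‖x^{k+1} − x^k‖ < ∞, and consequently {x^k} converges to a point of E. -/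
/-! Concavity of `φ` and the KL inequality (c) turn the sufficient decrease (a) into
`C d_k² ≤ c₀ W_k Δ_k`, where `d_k = ‖x^{k+1} - x^k‖`, `W_k` is the sum of the last `T` steps and
`Δ_k = φ(Φ_k - Φ*) - φ(Φ_{k+1} - Φ*)`; by AM–GM, `2T d_k ≤ W_k + (T² c₀ / C) Δ_k`. Summing over
`k ≥ k₀`, the `Δ_k` telescope to at most `φ(Φ_{k₀} - Φ*)`, and every step lies in at most `T`
windows, so the windows are absorbed by half of the left-hand side and the partial sums of `d_k`
stay bounded. A sequence of finite length is Cauchy. -/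

open Filter Finset

lemma Finset.sum_Ico_natCast {M : Type*} [AddCommMonoid M] (f : ℤ → M) (a b : ℕ) :
    ∑ k ∈ Ico a b, f k = ∑ h ∈ Ico (a : ℤ) b, f h := by
  refine sum_nbij' (↑) Int.toNat ?_ ?_ ?_ ?_ ?_ <;> intro k hk <;>
    simp only [mem_Ico, Nat.cast_le, Nat.cast_lt, Int.toNat_natCast, Int.ofNat_toNat] at * <;> omega

lemma sum_sum_Ico_sub_le_mul_sum (d : ℤ → ℝ) (hd : ∀ h, 0 ≤ d h) (T : ℕ) (K N : ℤ) :
    ∑ k ∈ Ico K N, ∑ h ∈ Ico (k - T) k, d h ≤ T * ∑ h ∈ Ico (K - T) N, d h := by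
  calc ∑ k ∈ Ico K N, ∑ h ∈ Ico (k - T) k, d h
      = ∑ j ∈ Ico (-(T : ℤ)) 0, ∑ k ∈ Ico K N, d (k + j) := by
        rw [sum_comm]
        refine sum_congr rfl fun k _ => ?_
        rw [sum_Ico_add, neg_add_eq_sub, zero_add]
    _ ≤ ∑ j ∈ Ico (-(T : ℤ)) 0, ∑ h ∈ Ico (K - T) N, d h := by
        refine sum_le_sum fun j hj => ?_
        rw [mem_Ico] at hj
        rw [sum_Ico_add']
        exact sum_le_sum_of_subset_of_nonneg (Ico_subset_Ico (by omega) (by omega))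
          fun h _ _ => hd h
    _ = T * ∑ h ∈ Ico (K - T) N, d h := by simp

lemma mul_sum_Ico_le_of_two_mul_le_window (d : ℤ → ℝ) (hd : ∀ h, 0 ≤ d h) (g : ℕ → ℝ)
    {T k₀ N : ℕ} {B : ℝ} (hB : 0 ≤ B) (hgN : 0 ≤ g N) (hN : k₀ ≤ N)
    (hstep : ∀ k : ℕ, k₀ ≤ k →
      2 * (T * d k) ≤ ∑ h ∈ Ico ((k : ℤ) - T) k, d h + B * (g k - g (k + 1))) :
    T * ∑ k ∈ Ico k₀ N, d k ≤ T * ∑ h ∈ Ico ((k₀ : ℤ) - T) k₀, d h + B * g k₀ := by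
  have hsplit : ∑ h ∈ Ico ((k₀ : ℤ) - T) N, d h =
      ∑ h ∈ Ico ((k₀ : ℤ) - T) k₀, d h + ∑ k ∈ Ico k₀ N, d k := by
    rw [sum_Ico_natCast, ← sum_union (Ico_disjoint_Ico_consecutive _ _ _),
      Ico_union_Ico_eq_Ico (by omega) (by exact_mod_cast hN)]
  have htel : ∑ k ∈ Ico k₀ N, (g k - g (k + 1)) = g k₀ - g N := by
    rw [← neg_sub, ← sum_Ico_sub g hN, ← sum_neg_distrib]; simp
  have hsum := sum_le_sum fun k (hk : k ∈ Ico k₀ N) => hstep k (mem_Ico.1 hk).1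
  rw [sum_add_distrib, ← mul_sum, ← mul_sum, ← mul_sum, htel] at hsum
  have hwin := sum_sum_Ico_sub_le_mul_sum d hd T k₀ N
  rw [← sum_Ico_natCast (fun k => ∑ h ∈ Ico (k - T) k, d h), hsplit] at hwin
  nlinarith [mul_nonneg hB hgN]

lemma summable_of_two_mul_le_window (d : ℤ → ℝ) (hd : ∀ h, 0 ≤ d h) (g : ℕ → ℝ)
    {T k₀ : ℕ} (hT : 1 ≤ T) {B : ℝ} (hB : 0 ≤ B) (hg : ∀ k, k₀ ≤ k → 0 ≤ g k)
    (hstep : ∀ k : ℕ, k₀ ≤ k →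
      2 * (T * d k) ≤ ∑ h ∈ Ico ((k : ℤ) - T) k, d h + B * (g k - g (k + 1))) :
    Summable fun k : ℕ => d k := by
  have hT' : (0 : ℝ) < T := by exact_mod_cast hT
  refine summable_of_sum_range_le (c := ∑ k ∈ range k₀, d k +
    (∑ h ∈ Ico ((k₀ : ℤ) - T) k₀, d h + B * g k₀ / T)) (fun k => hd k) fun n => ?_
  have htail := mul_sum_Ico_le_of_two_mul_le_window d hd g hB (hg _ le_sup_right)
    (le_max_right n k₀) hstep
  calc ∑ k ∈ range n, d k ≤ ∑ k ∈ range (max n k₀), d k :=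
        sum_le_sum_of_subset_of_nonneg (range_subset_range.2 (le_max_left n k₀))
          fun k _ _ => hd k
    _ = ∑ k ∈ range k₀, d k + ∑ k ∈ Ico k₀ (max n k₀), d k :=
        (sum_range_add_sum_Ico _ (le_max_right n k₀)).symm
    _ ≤ _ := by
        gcongr
        rw [← sub_le_iff_le_add', le_div_iff₀ hT']
        linarith

lemma ConcaveOn.deriv_mul_sub_le {φ : ℝ → ℝ} {S : Set ℝ} {φ' s t : ℝ}
    (hφ : ConcaveOn ℝ S φ) (ht : t ∈ S) (hs : s ∈ S) (hts : t ≤ s) (hφ' : HasDerivAt φ φ' s) :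
    φ' * (s - t) ≤ φ s - φ t := by
  rcases hts.eq_or_lt with rfl | hlt
  · simp
  · have := hφ.le_slope_of_hasDerivAt ht hs hlt hφ'
    rwa [slope_def_field, le_div_iff₀ (sub_pos.2 hlt)] at this

lemma two_mul_mul_le_of_mul_sq_le {C c T d W Δ : ℝ} (hC : 0 < C) (hc : 0 ≤ c) (hW : 0 ≤ W)
    (hΔ : 0 ≤ Δ) (h : C * d ^ 2 ≤ c * W * Δ) : 2 * (T * d) ≤ W + T ^ 2 * c / C * Δ := by
  refine two_mul_le_add_of_sq_le_mul hW (by positivity) ?_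
  calc (T * d) ^ 2 = T ^ 2 / C * (C * d ^ 2) := by field_simp
    _ ≤ T ^ 2 / C * (c * W * Δ) := by gcongr
    _ = W * (T ^ 2 * c / C * Δ) := by ring

lemma two_mul_mul_le_of_slope_le {C c p T d W δ Δ : ℝ} (hC : 0 < C) (hc : 0 ≤ c) (hW : 0 ≤ W)
    (hp : 0 < p) (hdec : C * d ^ 2 ≤ δ) (hslope : p * δ ≤ Δ) (hKL : 1 ≤ p * (c * W)) :
    2 * (T * d) ≤ W + T ^ 2 * c / C * Δ := by
  have hδ : 0 ≤ δ := (by positivity : 0 ≤ C * d ^ 2).trans hdec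
  refine two_mul_mul_le_of_mul_sq_le hC hc hW ((mul_nonneg hp.le hδ).trans hslope) ?_
  calc C * d ^ 2 ≤ 1 * δ := by linarith
    _ ≤ p * (c * W) * δ := by gcongr
    _ = c * W * (p * δ) := by ring
    _ ≤ c * W * Δ := by gcongr

theorem stmt_11_general {E : Type*} [NormedAddCommGroup E] [NormedSpace ℝ E] [FiniteDimensional ℝ E]
    (x : ℤ → E)
    (Φ : ℕ → ℝ) (Φstar : ℝ)
    (C c₀ : ℝ) (hC : 0 < C) (hc₀ : 0 < c₀) (T : ℕ) (hT : 1 ≤ T) (k₀ : ℕ)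
    -- φ ∈ F_η
    (η : ℝ) (φ : ℝ → ℝ)
    (hφnonneg : ∀ s ∈ Set.Ico (0 : ℝ) η, 0 ≤ φ s)
    (hφconc : ConcaveOn ℝ (Set.Ico 0 η) φ)
    (hφdiff : ∀ s ∈ Set.Ioo (0 : ℝ) η, HasDerivAt φ (deriv φ s) s)
    (hφderivpos : ∀ s ∈ Set.Ioo (0 : ℝ) η, 0 < deriv φ s)
    -- (a) sufficient decrease
    (ha : ∀ k : ℕ, C * ‖x ((k : ℤ) + 1) - x k‖ ^ 2 ≤ Φ k - Φ (k + 1))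
    -- (b) Φ* < Φ_k < Φ* + η for k ≥ k₀
    (hb : ∀ k : ℕ, k₀ ≤ k → Φstar < Φ k ∧ Φ k < Φstar + η)
    -- (c) KL-type inequality
    (hc : ∀ k : ℕ, k₀ ≤ k →
      1 ≤ deriv φ (Φ k - Φstar) *
        (c₀ * ∑ h ∈ Finset.Icc ((k : ℤ) - T) ((k : ℤ) - 1), ‖x (h + 1) - x h‖)) :
    Summable (fun k : ℕ => ‖x ((k : ℤ) + 1) - x k‖) ∧
    ∃ p : E, Tendsto (fun k : ℕ => x k) atTop (nhds p) := by
  set d : ℤ → ℝ := fun h => ‖x (h + 1) - x h‖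
  have hgap : ∀ k, k₀ ≤ k → Φ k - Φstar ∈ Set.Ioo 0 η := fun k hk =>
    ⟨sub_pos.2 (hb k hk).1, by linarith [(hb k hk).2]⟩
  have hstep : ∀ k : ℕ, k₀ ≤ k → 2 * (T * d k) ≤ ∑ h ∈ Ico ((k : ℤ) - T) k, d h +
      T ^ 2 * c₀ / C * (φ (Φ k - Φstar) - φ (Φ (k + 1) - Φstar)) := by
    intro k hk
    set s := Φ k - Φstar
    set t := Φ (k + 1) - Φstar
    set W := ∑ h ∈ Ico ((k : ℤ) - T) k, d h
    have hs := hgap k hk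
    have hdec : C * d k ^ 2 ≤ s - t := by linarith [ha k]
    have hts : t ≤ s := sub_nonneg.1 ((by positivity : 0 ≤ C * d k ^ 2).trans hdec)
    have hslope : deriv φ s * (s - t) ≤ φ s - φ t :=
      hφconc.deriv_mul_sub_le (Set.Ioo_subset_Ico_self (hgap (k + 1) (by omega)))
        (Set.Ioo_subset_Ico_self hs) hts (hφdiff s hs)
    have hKL : 1 ≤ deriv φ s * (c₀ * W) := by
      simpa only [Icc_sub_one_right_eq_Ico] using hc k hk
    exact two_mul_mul_le_of_slope_le hC hc₀.le (sum_nonneg fun h _ => norm_nonneg _)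
      (hφderivpos s hs) hdec hslope hKL
  have hsum : Summable fun k : ℕ => d k :=
    summable_of_two_mul_le_window d (fun h => norm_nonneg _) _ hT (by positivity)
      (fun k hk => hφnonneg _ (Set.Ioo_subset_Ico_self (hgap k hk))) hstep
  refine ⟨hsum, cauchySeq_tendsto_of_complete (cauchySeq_of_summable_dist ?_)⟩
  simpa only [dist_eq_norm', Nat.cast_succ] using hsum

theorem stmt_11 {E : Type*} [NormedAddCommGroup E] [NormedSpace ℝ E] [FiniteDimensional ℝ E]
    -- the sequence, extended by x^h = x^0 for h ≤ 0
    (x : ℤ → E) (hx0 : ∀ h : ℤ, h ≤ 0 → x h = x 0)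
    (Φ : ℕ → ℝ) (hΦmono : Antitone Φ) (Φstar : ℝ)
    (hΦlim : Tendsto Φ atTop (nhds Φstar))
    (C c₀ : ℝ) (hC : 0 < C) (hc₀ : 0 < c₀) (T : ℕ) (hT : 1 ≤ T) (k₀ : ℕ)
    -- φ ∈ F_η
    (η : ℝ) (hη : 0 < η) (φ : ℝ → ℝ)
    (hφ0 : φ 0 = 0) (hφnonneg : ∀ s ∈ Set.Ico (0 : ℝ) η, 0 ≤ φ s)
    (hφcont : ContinuousOn φ (Set.Ico 0 η))
    (hφconc : ConcaveOn ℝ (Set.Ico 0 η) φ)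
    (hφdiff : ∀ s ∈ Set.Ioo (0 : ℝ) η, HasDerivAt φ (deriv φ s) s)
    (hφderivcont : ContinuousOn (deriv φ) (Set.Ioo 0 η))
    (hφderivpos : ∀ s ∈ Set.Ioo (0 : ℝ) η, 0 < deriv φ s)
    -- (a) sufficient decrease
    (ha : ∀ k : ℕ, C * ‖x ((k : ℤ) + 1) - x k‖ ^ 2 ≤ Φ k - Φ (k + 1))
    -- (b) Φ* < Φ_k < Φ* + η for k ≥ k₀
    (hb : ∀ k : ℕ, k₀ ≤ k → Φstar < Φ k ∧ Φ k < Φstar + η)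
    -- (c) KL-type inequality
    (hc : ∀ k : ℕ, k₀ ≤ k →
      1 ≤ deriv φ (Φ k - Φstar) *
        (c₀ * ∑ h ∈ Finset.Icc ((k : ℤ) - T) ((k : ℤ) - 1), ‖x (h + 1) - x h‖)) :
    Summable (fun k : ℕ => ‖x ((k : ℤ) + 1) - x k‖) ∧
    ∃ p : E, Tendsto (fun k : ℕ => x k) atTop (nhds p) :=
  stmt_11_general x Φ Φstar C c₀ hC hc₀ T hT k₀ η φ hφnonneg hφconc hφdiff hφderivpos ha hb hc
end

section
/- Let T ≥ 1 be an integer, C₁ > 0, θ ∈ (0, 1/2], k₀ ∈ ℕ, and let {Φ_k}_{k∈ℕ} be a nonincreasing sequence of nonnegative reals converging to 0 such that Φ_k − Φ_{k+T} ≥ C₁ Φ_{k+T}^{2θ} for every k ≥ k₀. Then {Φ_k} converges linearly: there exist c > 0 and ρ ∈ (0,1) such that Φ_k ≤ c·ρ^k for all k ∈ ℕ. -/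
/-!
Since `Φ_k → 0`, from some index `N ≥ k₀` on all terms lie in `[0, 1]`, where `2θ ≤ 1` gives
`Φ ≤ Φ^{2θ}`. The decrease condition then becomes the contraction `(1 + C₁) Φ_{k+T} ≤ Φ_k`,
so along the multiples of `T` the sequence decays like `(1 + C₁)^{-k/T}`; monotonicity
fills in the indices in between and the finitely many before `N`.
-/

open Filter

lemma one_add_mul_le_of_mul_rpow_le_sub {x y C α : ℝ} (hx₀ : 0 ≤ x) (hx₁ : x ≤ 1)
    (hα : α ≤ 1) (hC : 0 ≤ C) (h : C * x ^ α ≤ y - x) : (1 + C) * x ≤ y := by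
  nlinarith [Real.self_le_rpow_of_le_one hx₀ hx₁ hα]

lemma Antitone.le_pow_div_mul_of_le_mul {Φ : ℕ → ℝ} (hΦ : Antitone Φ) {T : ℕ} {r : ℝ}
    (hr : 0 ≤ r) (h : ∀ k, Φ (k + T) ≤ r * Φ k) (k : ℕ) : Φ k ≤ r ^ (k / T) * Φ 0 := by
  have hmul : ∀ n, Φ (n * T) ≤ r ^ n * Φ 0 := by
    intro n
    induction n with
    | zero => simp
    | succ n ih =>
      calc Φ ((n + 1) * T) = Φ (n * T + T) := by rw [add_one_mul]
        _ ≤ r * Φ (n * T) := h _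
        _ ≤ r * (r ^ n * Φ 0) := mul_le_mul_of_nonneg_left ih hr
        _ = r ^ (n + 1) * Φ 0 := by ring
  exact (hΦ (Nat.div_mul_le_self k T)).trans (hmul _)

lemma pow_pow_div_le_pow_div_pow {ρ : ℝ} (hρ₀ : 0 < ρ) (hρ₁ : ρ ≤ 1) {T : ℕ} (hT : 0 < T)
    (k : ℕ) :
    (ρ ^ T) ^ (k / T) ≤ ρ ^ k / ρ ^ T := by
  rw [le_div_iff₀ (pow_pos hρ₀ T), ← pow_mul, ← pow_add, mul_comm]
  exact pow_le_pow_of_le_one hρ₀.le hρ₁ (Nat.lt_div_mul_add hT).le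

lemma Antitone.exists_le_mul_pow_of_le_mul {Φ : ℕ → ℝ} (hΦ : Antitone Φ) (hΦ₀ : 0 ≤ Φ 0)
    {T : ℕ} (hT : 0 < T) {r : ℝ} (hr₀ : 0 < r) (hr₁ : r < 1) (h : ∀ k, Φ (k + T) ≤ r * Φ k) :
    ∃ ρ ∈ Set.Ioo (0 : ℝ) 1, ∀ k, Φ k ≤ Φ 0 / r * ρ ^ k := by
  set ρ := r ^ (T⁻¹ : ℝ)
  have hρ₀ : 0 < ρ := Real.rpow_pos_of_pos hr₀ _
  have hρ₁ : ρ < 1 := Real.rpow_lt_one hr₀.le hr₁ (by positivity)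
  have hρT : ρ ^ T = r := Real.rpow_inv_natCast_pow hr₀.le hT.ne'
  refine ⟨ρ, ⟨hρ₀, hρ₁⟩, fun k => ?_⟩
  calc Φ k ≤ r ^ (k / T) * Φ 0 := hΦ.le_pow_div_mul_of_le_mul hr₀.le h k
    _ ≤ ρ ^ k / r * Φ 0 := by
      gcongr
      simpa only [hρT] using pow_pow_div_le_pow_div_pow hρ₀ hρ₁.le hT k
    _ = Φ 0 / r * ρ ^ k := by ring

lemma Antitone.exists_le_mul_pow_of_le_mul_pow_add {Φ : ℕ → ℝ} (hΦ : Antitone Φ) {ρ : ℝ}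
    (hρ₀ : 0 < ρ) (hρ₁ : ρ ≤ 1) {N : ℕ} {c : ℝ} (h : ∀ k, Φ (k + N) ≤ c * ρ ^ k) :
    ∃ c' : ℝ, 0 < c' ∧ ∀ k, Φ k ≤ c' * ρ ^ k := by
  set M := max (max c (Φ 0)) 1
  have hρN : 0 < ρ ^ N := pow_pos hρ₀ N
  refine ⟨M / ρ ^ N, by positivity, fun k => ?_⟩
  rw [div_mul_eq_mul_div, le_div_iff₀ hρN]
  rcases le_or_gt N k with hNk | hkN
  · calc Φ k * ρ ^ N = Φ (k - N + N) * ρ ^ N := by rw [Nat.sub_add_cancel hNk]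
      _ ≤ c * ρ ^ (k - N) * ρ ^ N := by gcongr; exact h _
      _ ≤ M * ρ ^ (k - N) * ρ ^ N := by gcongr; exact (le_max_left _ _).trans (le_max_left _ _)
      _ = M * ρ ^ k := by rw [mul_assoc, pow_sub_mul_pow ρ hNk]
  · calc Φ k * ρ ^ N ≤ M * ρ ^ N := by
          gcongr
          exact (hΦ k.zero_le).trans ((le_max_right _ _).trans (le_max_left _ _))
      _ ≤ M * ρ ^ k :=
          mul_le_mul_of_nonneg_left (pow_le_pow_of_le_one hρ₀.le hρ₁ hkN.le) (by positivity)

theorem stmt_13_general (T : ℕ) (hT : 1 ≤ T) (C₁ : ℝ) (hC₁ : 0 < C₁)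
    (θ : ℝ) (hθ : θ ∈ Set.Ioc (0 : ℝ) (1 / 2)) (k₀ : ℕ)
    (Φ : ℕ → ℝ) (hmono : Antitone Φ)
    (hlim : Filter.Tendsto Φ Filter.atTop (nhds 0))
    (hdec : ∀ k, k₀ ≤ k → C₁ * Φ (k + T) ^ (2 * θ) ≤ Φ k - Φ (k + T)) :
    ∃ c : ℝ, 0 < c ∧ ∃ ρ ∈ Set.Ioo (0 : ℝ) 1, ∀ k : ℕ, Φ k ≤ c * ρ ^ k := by
  have hnonneg : ∀ k, 0 ≤ Φ k := hmono.le_of_tendsto hlim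
  obtain ⟨N, hN₁, hNk₀⟩ :=
    ((hlim.eventually (ge_mem_nhds one_pos)).and (eventually_ge_atTop k₀)).exists
  set Ψ := fun k => Φ (k + N)
  have hΨ : Antitone Ψ := fun a b hab => hmono (by omega)
  have hcontract : ∀ k, Ψ (k + T) ≤ (1 + C₁)⁻¹ * Ψ k := by
    intro k
    rw [inv_mul_eq_div, le_div_iff₀' (by positivity)]
    refine one_add_mul_le_of_mul_rpow_le_sub (α := 2 * θ) (hnonneg _) ?_ (by linarith [hθ.2])
      hC₁.le ?_
    · exact (hmono (by omega)).trans hN₁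
    · simpa only [Ψ, add_right_comm] using hdec (k + N) (by omega)
  obtain ⟨ρ, hρ, hΨρ⟩ := hΨ.exists_le_mul_pow_of_le_mul (hnonneg (0 + N)) hT
    (by positivity) (inv_lt_one_of_one_lt₀ (by linarith)) hcontract
  obtain ⟨c, hc, hΦρ⟩ := hmono.exists_le_mul_pow_of_le_mul_pow_add hρ.1 hρ.2.le hΨρ
  exact ⟨c, hc, ρ, hρ, hΦρ⟩

theorem stmt_13 (T : ℕ) (hT : 1 ≤ T) (C₁ : ℝ) (hC₁ : 0 < C₁)
    (θ : ℝ) (hθ : θ ∈ Set.Ioc (0 : ℝ) (1 / 2)) (k₀ : ℕ)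
    (Φ : ℕ → ℝ) (hmono : Antitone Φ) (hnonneg : ∀ k, 0 ≤ Φ k)
    (hlim : Filter.Tendsto Φ Filter.atTop (nhds 0))
    (hdec : ∀ k, k₀ ≤ k → C₁ * Φ (k + T) ^ (2 * θ) ≤ Φ k - Φ (k + T)) :
    ∃ c : ℝ, 0 < c ∧ ∃ ρ ∈ Set.Ioo (0 : ℝ) 1, ∀ k : ℕ, Φ k ≤ c * ρ ^ k :=
  stmt_13_general T hT C₁ hC₁ θ hθ k₀ Φ hmono hlim hdec
end

section
/- Let T ≥ 1 be an integer, C₁ > 0, θ ∈ (1/2, 1), k₀ ∈ ℕ, and let {Φ_k}_{k∈ℕ} be a nonincreasing sequence of nonnegative reals converging to 0 such that Φ_k − Φ_{k+T} ≥ C₁ Φ_{k+T}^{2θ} for every k ≥ k₀. Then {Φ_k} converges sublinearly at rate O((k+1)^{−1/(2θ−1)}): there exists C₂ > 0 such that Φ_k ≤ C₂ (k+1)^{−1/(2θ−1)} for all k ∈ ℕ. -/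
/-! With `γ = 2θ - 1 ∈ (0, 1)`, the recursion makes `ψ k = Φ k ^ (-γ)` grow by a fixed
amount `c > 0` every `T` steps once `k ≥ k₀`: if `Φ (k + T) ≥ Φ k / 2` this follows from the
concavity of `t ↦ t ^ γ`, and otherwise `ψ` is at least multiplied by `2 ^ γ`. Hence `ψ k` grows
linearly in `k`, which is the bound `Φ k = O((k + 1) ^ (-1 / γ))`. If some `Φ m` vanishes, `Φ` is
eventually zero. -/

open Real Filter

section RpowNeg

variable {x y γ : ℝ}

lemma mul_sub_mul_rpow_neg_div_le (hy : 0 < y) (hx : 0 < x) (hγ₀ : 0 ≤ γ) (hγ₁ : γ ≤ 1) :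
    γ * (x - y) * y ^ (-γ) / x ≤ y ^ (-γ) - x ^ (-γ) := by
  have hbernoulli : (y / x) ^ γ ≤ 1 + γ * (y / x - 1) := by
    simpa using rpow_one_add_le_one_add_mul_self (s := y / x - 1)
      (by linarith [div_nonneg hy.le hx.le]) hγ₀ hγ₁
  have hscale : y ^ (-γ) * (y / x) ^ γ = x ^ (-γ) := by
    rw [div_rpow hy.le hx.le, rpow_neg hy.le, rpow_neg hx.le]
    field_simp
  calc γ * (x - y) * y ^ (-γ) / x = y ^ (-γ) - y ^ (-γ) * (1 + γ * (y / x - 1)) := by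
        field_simp; ring
    _ ≤ y ^ (-γ) - y ^ (-γ) * (y / x) ^ γ := by gcongr
    _ = y ^ (-γ) - x ^ (-γ) := by rw [hscale]

lemma two_rpow_sub_one_mul_rpow_neg_le (hy : 0 < y) (hxy : 2 * y ≤ x) (hγ : 0 ≤ γ) :
    (2 ^ γ - 1) * x ^ (-γ) ≤ y ^ (-γ) - x ^ (-γ) := by
  have hhalf : (x / 2) ^ (-γ) ≤ y ^ (-γ) :=
    rpow_le_rpow_of_nonpos hy (by linarith) (neg_nonpos.2 hγ)
  rw [div_rpow (by linarith) zero_le_two, rpow_neg zero_le_two, div_inv_eq_mul] at hhalf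
  linarith

lemma rpow_neg_add_min_le_rpow_neg {P C : ℝ} (hy : 0 < y) (hxy : y ≤ x) (hxP : x ≤ P)
    (hγ₀ : 0 ≤ γ) (hγ₁ : γ ≤ 1) (hC : 0 ≤ C) (h : C * y ^ (γ + 1) ≤ x - y) :
    x ^ (-γ) + min (γ * C / 2) ((2 ^ γ - 1) * P ^ (-γ)) ≤ y ^ (-γ) := by
  have hx : 0 < x := hy.trans_le hxy
  rcases le_or_gt x (2 * y) with hx2 | hx2
  · have hconc := mul_sub_mul_rpow_neg_div_le hy hx hγ₀ hγ₁
    have hcancel : y ^ (γ + 1) * y ^ (-γ) = y := by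
      rw [← rpow_add hy]; simp
    have hmin : γ * C / 2 ≤ γ * (x - y) * y ^ (-γ) / x := by
      rw [le_div_iff₀ hx]
      calc γ * C / 2 * x ≤ γ * C * y := by nlinarith [mul_nonneg hγ₀ hC]
        _ = γ * (C * y ^ (γ + 1)) * y ^ (-γ) := by
          rw [mul_assoc γ (C * _), mul_assoc C, hcancel, ← mul_assoc]
        _ ≤ γ * (x - y) * y ^ (-γ) := by gcongr
    linarith [min_le_left (γ * C / 2) ((2 ^ γ - 1) * P ^ (-γ))]
  · have hP : P ^ (-γ) ≤ x ^ (-γ) := rpow_le_rpow_of_nonpos hx hxP (neg_nonpos.2 hγ₀)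
    have h2 : (0 : ℝ) ≤ 2 ^ γ - 1 := sub_nonneg.2 (one_le_rpow one_le_two hγ₀)
    linarith [min_le_right (γ * C / 2) ((2 ^ γ - 1) * P ^ (-γ)),
      mul_le_mul_of_nonneg_left hP h2, two_rpow_sub_one_mul_rpow_neg_le hy hx2.le hγ₀]

end RpowNeg

section LinearGrowth

variable {ψ : ℕ → ℝ} {k₀ T : ℕ} {c : ℝ}

lemma add_mul_le_of_forall_add_le (hstep : ∀ k, k₀ ≤ k → ψ k + c ≤ ψ (k + T)) (n : ℕ) :
    ψ k₀ + n * c ≤ ψ (k₀ + n * T) := by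
  induction n with
  | zero => simp
  | succ n ih =>
    have := hstep (k₀ + n * T) (Nat.le_add_right _ _)
    rw [show k₀ + (n + 1) * T = k₀ + n * T + T by ring]
    push_cast
    linarith

lemma pos_of_forall_add_le (hc : 0 < c) (hstep : ∀ k, k₀ ≤ k → ψ k + c ≤ ψ (k + T)) : 0 < T :=
  Nat.pos_of_ne_zero fun hT ↦ by
    have := hstep k₀ le_rfl
    simp only [hT, add_zero] at this
    linarith

lemma Monotone.mul_add_one_le_of_forall_add_le (hψ : Monotone ψ) (hT : 0 < T) (hc : 0 ≤ c)
    (h₀ : 0 ≤ ψ k₀) (hstep : ∀ k, k₀ ≤ k → ψ k + c ≤ ψ (k + T)) (k : ℕ) (hk : 2 * k₀ + 2 * T ≤ k) :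
    c / (2 * T) * ((k : ℝ) + 1) ≤ ψ k := by
  obtain ⟨n, m, hm, hnm⟩ : ∃ n m, m < T ∧ n * T + m = k - k₀ :=
    ⟨_, _, Nat.mod_lt (k - k₀) hT, Nat.div_add_mod' (k - k₀) T⟩
  have hnk : k₀ + n * T ≤ k := by omega
  have hkn : k + 1 ≤ 2 * (n * T) := by omega
  calc c / (2 * T) * ((k : ℝ) + 1) ≤ c / (2 * T) * (2 * (n * T) : ℕ) := by
        gcongr; exact_mod_cast hkn
    _ = n * c := by push_cast; field_simp
    _ ≤ ψ (k₀ + n * T) := by linarith [add_mul_le_of_forall_add_le hstep n]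
    _ ≤ ψ k := hψ hnk

end LinearGrowth

lemma Antitone.exists_forall_le_mul_rpow_neg {Φ : ℕ → ℝ} (hΦ : Antitone Φ) {p : ℝ} (hp : 0 ≤ p)
    (h : ∃ C, 0 < C ∧ ∀ᶠ k in atTop, Φ k ≤ C * ((k : ℝ) + 1) ^ (-p)) :
    ∃ C₂ : ℝ, 0 < C₂ ∧ ∀ k : ℕ, Φ k ≤ C₂ * ((k : ℝ) + 1) ^ (-p) := by
  obtain ⟨C, hC, hev⟩ := h
  obtain ⟨N, hN⟩ := eventually_atTop.1 hev
  set D := max C (Φ 0 * ((N : ℝ) + 1) ^ p)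
  refine ⟨D, hC.trans_le (le_max_left _ _), fun k ↦ ?_⟩
  rcases le_or_gt N k with hk | hk
  · exact (hN k hk).trans (by gcongr; exact le_max_left _ _)
  · calc Φ k ≤ Φ 0 * ((N : ℝ) + 1) ^ p * ((N : ℝ) + 1) ^ (-p) := by
          rw [mul_assoc, ← rpow_add (by positivity), add_neg_cancel, rpow_zero, mul_one]
          exact hΦ (Nat.zero_le k)
      _ ≤ D * ((k : ℝ) + 1) ^ (-p) := by
          have hD : 0 ≤ D := hC.le.trans (le_max_left _ _)
          have hNk : ((N : ℝ) + 1) ^ (-p) ≤ ((k : ℝ) + 1) ^ (-p) :=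
            rpow_le_rpow_of_nonpos (by positivity) (by gcongr) (neg_nonpos.2 hp)
          exact mul_le_mul (le_max_right _ _) hNk (by positivity) hD

theorem stmt_14_general (T : ℕ) (C₁ : ℝ) (hC₁ : 0 < C₁)
    (θ : ℝ) (hθ : θ ∈ Set.Ioo (1 / 2 : ℝ) 1) (k₀ : ℕ)
    (Φ : ℕ → ℝ) (hmono : Antitone Φ) (hnonneg : ∀ k, 0 ≤ Φ k)
    (hdec : ∀ k, k₀ ≤ k → C₁ * Φ (k + T) ^ (2 * θ) ≤ Φ k - Φ (k + T)) :
    ∃ C₂ : ℝ, 0 < C₂ ∧ ∀ k : ℕ, Φ k ≤ C₂ * ((k : ℝ) + 1) ^ (-(1 / (2 * θ - 1))) := by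
  obtain ⟨hθ₁, hθ₂⟩ := hθ
  set γ := 2 * θ - 1
  have hγ₀ : 0 < γ := by linarith
  refine hmono.exists_forall_le_mul_rpow_neg (by positivity) ?_
  by_cases hzero : ∃ m, Φ m = 0
  · obtain ⟨m, hm⟩ := hzero
    refine ⟨1, one_pos, eventually_atTop.2 ⟨m, fun k hk ↦ ?_⟩⟩
    rw [le_antisymm (hm ▸ hmono hk) (hnonneg k)]
    positivity
  push Not at hzero
  have hpos k : 0 < Φ k := (hnonneg k).lt_of_ne' (hzero k)
  set c := min (γ * C₁ / 2) ((2 ^ γ - 1) * Φ k₀ ^ (-γ))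
  have hc : 0 < c := lt_min (by positivity)
    (mul_pos (sub_pos.2 (one_lt_rpow one_lt_two hγ₀)) (rpow_pos_of_pos (hpos k₀) _))
  have hstep k (hk : k₀ ≤ k) : Φ k ^ (-γ) + c ≤ Φ (k + T) ^ (-γ) :=
    rpow_neg_add_min_le_rpow_neg (hpos _) (hmono (Nat.le_add_right k T)) (hmono hk)
      hγ₀.le (by linarith) hC₁.le (by simpa [γ, sub_add_cancel] using hdec k hk)
  have hψ : Monotone fun k ↦ Φ k ^ (-γ) := fun a b hab ↦
    rpow_le_rpow_of_nonpos (hpos b) (hmono hab) (neg_nonpos.2 hγ₀.le)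
  have hT : 0 < T := pos_of_forall_add_le hc hstep
  refine ⟨(c / (2 * T)) ^ (-(1 / γ)), by positivity,
    eventually_atTop.2 ⟨2 * k₀ + 2 * T, fun k hk ↦ ?_⟩⟩
  rw [← mul_rpow (by positivity) (by positivity), show -(1 / γ) = (-γ)⁻¹ by rw [inv_neg, one_div],
    le_rpow_inv_iff_of_neg (hpos k) (by positivity) (by linarith)]
  exact hψ.mul_add_one_le_of_forall_add_le hT hc.le (rpow_nonneg (hnonneg k₀) _) hstep k hk

theorem stmt_14 (T : ℕ) (hT : 1 ≤ T) (C₁ : ℝ) (hC₁ : 0 < C₁)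
    (θ : ℝ) (hθ : θ ∈ Set.Ioo (1 / 2 : ℝ) 1) (k₀ : ℕ)
    (Φ : ℕ → ℝ) (hmono : Antitone Φ) (hnonneg : ∀ k, 0 ≤ Φ k)
    (hlim : Filter.Tendsto Φ Filter.atTop (nhds 0))
    (hdec : ∀ k, k₀ ≤ k → C₁ * Φ (k + T) ^ (2 * θ) ≤ Φ k - Φ (k + T)) :
    ∃ C₂ : ℝ, 0 < C₂ ∧ ∀ k : ℕ, Φ k ≤ C₂ * ((k : ℝ) + 1) ^ (-(1 / (2 * θ - 1))) :=
  stmt_14_general T C₁ hC₁ θ hθ k₀ Φ hmono hnonneg hdec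
end
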